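/- If T is (n,k)-quasi-*-paranormal, then the nonzero parts of the point spectrum and the joint point spectrum coincide: σ_jp(T) \ {0} = σ_p(T) \ {0}; similarly σ_ja(T) \ {0} = σ_a(T) \ {0}. -/

import Mathlib

/-! If `(T - λ) xₘ → 0` along unit vectors and `λ ≠ 0`, then `Tʲ xₘ - λʲ xₘ → 0`, so
`‖Tʲ xₘ‖ → |λ|ʲ` for every `j`, and the defining inequality gives
`limsup ‖T* Tᵏ xₘ‖ ≤ |λ|ᵏ⁺¹`. Since `T* Tᵏ xₘ - λᵏ T* xₘ → 0`, this yields `limsup ‖T* xₘ‖ ≤ |λ|`.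
As `⟪T* xₘ, λ̄ xₘ⟫ = λ̄ ⟪xₘ, T xₘ⟫ → |λ|²`, expanding the square shows `‖T* xₘ - λ̄ xₘ‖ → 0`.
An eigenvector is the case of a constant sequence. -/

open ContinuousLinearMap Filter RCLike
open scoped InnerProductSpace Topology ComplexConjugate

section NormedSpace

variable {𝕜 E : Type*} [NormedField 𝕜] [NormedAddCommGroup E] [NormedSpace 𝕜 E]

theorem tendsto_pow_apply_sub_smul_pow {T : E →L[𝕜] E} {lam : 𝕜} {x : ℕ → E}
    (h : Tendsto (fun m => T (x m) - lam • x m) atTop (𝓝 0)) (j : ℕ) :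
    Tendsto (fun m => (T ^ j) (x m) - lam ^ j • x m) atTop (𝓝 0) := by
  induction j with
  | zero => simp
  | succ j ih =>
    have hsplit : ∀ m, (T ^ (j + 1)) (x m) - lam ^ (j + 1) • x m =
        T ((T ^ j) (x m) - lam ^ j • x m) + lam ^ j • (T (x m) - lam • x m) := fun m => by
      rw [pow_succ', mul_apply_eq_comp, map_sub, map_smul, smul_sub, smul_smul, ← pow_succ]
      abel
    simpa only [hsplit, Function.comp_def, map_zero, smul_zero, add_zero] using
      ((T.continuous.tendsto 0).comp ih).add (h.const_smul (lam ^ j))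

theorem tendsto_norm_of_tendsto_sub {y z : ℕ → E} {c : ℝ} (hz : ∀ m, ‖z m‖ = c)
    (h : Tendsto (fun m => y m - z m) atTop (𝓝 0)) :
    Tendsto (fun m => ‖y m‖) atTop (𝓝 c) := by
  rw [← tendsto_sub_nhds_zero_iff]
  refine squeeze_zero_norm (fun m => ?_) (tendsto_zero_iff_norm_tendsto_zero.1 h)
  rw [← hz m]
  exact abs_norm_sub_norm_le _ _

end NormedSpace

section InnerProductSpace

variable {𝕜 E : Type*} [RCLike 𝕜] [NormedAddCommGroup E] [InnerProductSpace 𝕜 E]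

theorem tendsto_sub_of_norm_le_of_tendsto_re_inner {u v : ℕ → E} {a : ℕ → ℝ} {r : ℝ}
    (hu : ∀ m, ‖u m‖ ≤ a m) (ha : Tendsto a atTop (𝓝 r))
    (hv : Tendsto (fun m => ‖v m‖) atTop (𝓝 r))
    (huv : Tendsto (fun m => re ⟪u m, v m⟫_𝕜) atTop (𝓝 (r ^ 2))) :
    Tendsto (fun m => u m - v m) atTop (𝓝 0) := by
  have hbound : ∀ m, ‖u m - v m‖ ^ 2 ≤ a m ^ 2 - 2 * re ⟪u m, v m⟫_𝕜 + ‖v m‖ ^ 2 := fun m => by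
    rw [norm_sub_sq (𝕜 := 𝕜)]
    gcongr
    exact hu m
  have hlim : Tendsto (fun m => a m ^ 2 - 2 * re ⟪u m, v m⟫_𝕜 + ‖v m‖ ^ 2) atTop (𝓝 0) := by
    convert ((ha.pow 2).sub (huv.const_mul 2)).add (hv.pow 2) using 2
    ring
  have hsq := squeeze_zero (fun m => sq_nonneg ‖u m - v m‖) hbound hlim
  rw [tendsto_zero_iff_norm_tendsto_zero]
  simpa only [Real.sqrt_sq (norm_nonneg _), Real.sqrt_zero] using hsq.sqrt

theorem tendsto_inner_of_tendsto_sub_smul {x y : ℕ → E} {lam : 𝕜} (hx : ∀ m, ‖x m‖ = 1)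
    (h : Tendsto (fun m => y m - lam • x m) atTop (𝓝 0)) :
    Tendsto (fun m => ⟪x m, y m⟫_𝕜) atTop (𝓝 lam) := by
  rw [← tendsto_sub_nhds_zero_iff]
  refine squeeze_zero_norm (fun m => ?_) (tendsto_zero_iff_norm_tendsto_zero.1 h)
  calc ‖⟪x m, y m⟫_𝕜 - lam‖ = ‖⟪x m, y m - lam • x m⟫_𝕜‖ := by
        rw [inner_sub_right, inner_smul_right, inner_self_eq_norm_sq_to_K, hx m]
        simp
    _ ≤ ‖x m‖ * ‖y m - lam • x m‖ := norm_inner_le_norm _ _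
    _ = ‖y m - lam • x m‖ := by rw [hx m, one_mul]

variable [CompleteSpace E]

def IsQuasiStarParanormal (n k : ℕ) (T : E →L[𝕜] E) : Prop :=
  ∀ x : E, ‖adjoint T (T ^ k <| x)‖ ^ (n + 1) ≤ ‖T ^ (n + 1) <| T ^ k <| x‖ * ‖T ^ k <| x‖ ^ n

namespace IsQuasiStarParanormal

variable {n k : ℕ} {T : E →L[𝕜] E}

theorem norm_adjoint_pow_apply_le (hT : IsQuasiStarParanormal n k T) (x : E) :
    ‖adjoint T ((T ^ k) x)‖ ≤
      (‖(T ^ (n + 1 + k)) x‖ * ‖(T ^ k) x‖ ^ n) ^ ((n + 1 : ℕ) : ℝ)⁻¹ := by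
  rw [← Real.pow_rpow_inv_natCast (norm_nonneg (adjoint T ((T ^ k) x))) n.succ_ne_zero,
    pow_add, mul_apply_eq_comp]
  gcongr
  exact hT x

theorem exists_norm_adjoint_apply_le_tendsto (hT : IsQuasiStarParanormal n k T) {lam : 𝕜}
    (hlam : lam ≠ 0) {x : ℕ → E} (hx : ∀ m, ‖x m‖ = 1)
    (h : Tendsto (fun m => T (x m) - lam • x m) atTop (𝓝 0)) :
    ∃ b : ℕ → ℝ, (∀ m, ‖adjoint T (x m)‖ ≤ b m) ∧ Tendsto b atTop (𝓝 ‖lam‖) := by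
  have hpow := tendsto_pow_apply_sub_smul_pow h
  have hnorm (j : ℕ) : Tendsto (fun m => ‖(T ^ j) (x m)‖) atTop (𝓝 (‖lam‖ ^ j)) :=
    tendsto_norm_of_tendsto_sub (fun m => by rw [norm_smul, hx m, mul_one, norm_pow]) (hpow j)
  have hk : 0 < ‖lam‖ ^ k := pow_pos (norm_pos_iff.2 hlam) k
  refine ⟨fun m => ((‖(T ^ (n + 1 + k)) (x m)‖ * ‖(T ^ k) (x m)‖ ^ n) ^ ((n + 1 : ℕ) : ℝ)⁻¹ +
      ‖adjoint T‖ * ‖(T ^ k) (x m) - lam ^ k • x m‖) / ‖lam‖ ^ k, fun m => ?_, ?_⟩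
  · rw [le_div_iff₀ hk]
    calc ‖adjoint T (x m)‖ * ‖lam‖ ^ k
        = ‖adjoint T ((T ^ k) (x m)) - adjoint T ((T ^ k) (x m) - lam ^ k • x m)‖ := by
          rw [← norm_pow, mul_comm, ← norm_smul, ← map_smul, ← map_sub, sub_sub_cancel]
      _ ≤ _ := (norm_sub_le _ _).trans (add_le_add (hT.norm_adjoint_pow_apply_le (x m))
          ((adjoint T).le_opNorm _))
  · have hprod : ‖lam‖ ^ (n + 1 + k) * (‖lam‖ ^ k) ^ n = (‖lam‖ ^ (k + 1)) ^ (n + 1) := by ring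
    have hroot := ((hnorm (n + 1 + k)).mul ((hnorm k).pow n)).rpow_const
      (p := ((n + 1 : ℕ) : ℝ)⁻¹) (Or.inr (by positivity))
    rw [hprod, Real.pow_rpow_inv_natCast (by positivity) n.succ_ne_zero] at hroot
    have hb := (hroot.add ((tendsto_zero_iff_norm_tendsto_zero.1 (hpow k)).const_mul
      ‖adjoint T‖)).div_const (‖lam‖ ^ k)
    rwa [mul_zero, add_zero, pow_succ, mul_div_cancel_left₀ _ hk.ne'] at hb

theorem tendsto_adjoint_apply_sub_smul (hT : IsQuasiStarParanormal n k T) {lam : 𝕜}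
    (hlam : lam ≠ 0) {x : ℕ → E} (hx : ∀ m, ‖x m‖ = 1)
    (h : Tendsto (fun m => T (x m) - lam • x m) atTop (𝓝 0)) :
    Tendsto (fun m => adjoint T (x m) - conj lam • x m) atTop (𝓝 0) := by
  obtain ⟨b, hb, hb_lim⟩ := hT.exists_norm_adjoint_apply_le_tendsto hlam hx h
  refine tendsto_sub_of_norm_le_of_tendsto_re_inner (𝕜 := 𝕜) hb hb_lim ?_ ?_
  · simp only [norm_smul, norm_conj, hx, mul_one, tendsto_const_nhds]
  · have hinner : ∀ m, ⟪adjoint T (x m), conj lam • x m⟫_𝕜 = conj lam * ⟪x m, T (x m)⟫_𝕜 :=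
      fun m => by rw [inner_smul_right, adjoint_inner_left]
    have hlim := (continuous_re.tendsto _).comp
      ((tendsto_inner_of_tendsto_sub_smul hx h).const_mul (conj lam))
    simpa only [hinner, Function.comp_def, RCLike.conj_mul, ← ofReal_pow, ofReal_re] using hlim

theorem adjoint_apply_eq_of_apply_eq (hT : IsQuasiStarParanormal n k T) {lam : 𝕜}
    (hlam : lam ≠ 0) {x : E} (hTx : T x = lam • x) : adjoint T x = conj lam • x := by
  rcases eq_or_ne x 0 with rfl | hx0
  · simp
  set y : E := (‖x‖⁻¹ : 𝕜) • x
  have hTy : T y = lam • y := by rw [map_smul, hTx, smul_comm]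
  have hlim := hT.tendsto_adjoint_apply_sub_smul hlam (x := fun _ => y)
    (fun _ => norm_smul_inv_norm hx0) (by simp only [hTy, sub_self, tendsto_const_nhds])
  have hy : adjoint T y = conj lam • y :=
    sub_eq_zero.1 (tendsto_nhds_unique tendsto_const_nhds hlim)
  have hxy : x = (‖x‖ : 𝕜) • y := by
    rw [smul_smul, mul_inv_cancel₀ (ofReal_ne_zero.2 (norm_ne_zero_iff.2 hx0)), one_smul]
  rw [hxy, map_smul, hy, smul_comm]

end IsQuasiStarParanormal

end InnerProductSpace

/-- If `T` is `(n,k)`-quasi-*-paranormal, then the nonzero parts of the point spectrum and of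
the joint point spectrum coincide, and the nonzero parts of the approximate point spectrum and
of the joint approximate point spectrum coincide. -/
theorem stmt_15 {H : Type*} [NormedAddCommGroup H] [InnerProductSpace ℂ H] [CompleteSpace H]
    (T : H →L[ℂ] H) (n k : ℕ)
    (hT : ∀ x : H, ‖adjoint T (T ^ k <| x)‖ ^ (n + 1) ≤
      ‖T ^ (n + 1) <| T ^ k <| x‖ * ‖T ^ k <| x‖ ^ n) :
    ({lam : ℂ | ∃ x : H, x ≠ 0 ∧ T x = lam • x ∧ adjoint T x = (starRingEnd ℂ lam) • x} \ {0}
        = {lam : ℂ | ∃ x : H, x ≠ 0 ∧ T x = lam • x} \ {0})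
    ∧ ({lam : ℂ | ∃ x : ℕ → H, (∀ m, ‖x m‖ = 1) ∧
          Tendsto (fun m => T (x m) - lam • x m) atTop (nhds 0) ∧
          Tendsto (fun m => adjoint T (x m) - (starRingEnd ℂ lam) • x m) atTop (nhds 0)} \ {0}
        = {lam : ℂ | ∃ x : ℕ → H, (∀ m, ‖x m‖ = 1) ∧
            Tendsto (fun m => T (x m) - lam • x m) atTop (nhds 0)} \ {0}) := by
  have hQ : IsQuasiStarParanormal n k T := hT
  constructor
  · ext lam
    simp only [Set.mem_sdiff, Set.mem_ofPred_eq, Set.mem_singleton_iff]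
    refine ⟨fun ⟨⟨x, hx0, hTx, _⟩, hlam⟩ => ⟨⟨x, hx0, hTx⟩, hlam⟩, fun ⟨⟨x, hx0, hTx⟩, hlam⟩ =>
      ⟨⟨x, hx0, hTx, hQ.adjoint_apply_eq_of_apply_eq hlam hTx⟩, hlam⟩⟩
  · ext lam
    simp only [Set.mem_sdiff, Set.mem_ofPred_eq, Set.mem_singleton_iff]
    refine ⟨fun ⟨⟨x, hx, hTx, _⟩, hlam⟩ => ⟨⟨x, hx, hTx⟩, hlam⟩, fun ⟨⟨x, hx, hTx⟩, hlam⟩ =>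
      ⟨⟨x, hx, hTx, hQ.tendsto_adjoint_apply_sub_smul hlam hx hTx⟩, hlam⟩⟩
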